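/- arXiv:1804.07231 — 10 statements merged into one kernel-verified Lean document; each statement's English description precedes it below -/
import Mathlib

section
/- If S ⊆ A × B is a shuffling relation between linear orders (A,<_A) and (B,<_B), then both (A,<_A) and (B,<_B) are dense linear orders. -/
/-!
Density of `A`: for `a < a'` some fiber `S(A,b)` contains `a` but not `a'`, so `a'` bounds it
from above. Since the fiber has no supremum, `a'` is not its least upper bound, and the smaller
upper bound found below `a'` must lie strictly above `a`, as otherwise `a` would be a maximum.

Density of `B`: for `b < b'` pick `a ∈ S(A,b') \ S(A,b)` and, as `S(A,b')` has no maximum,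
`a'' > a` in `S(A,b')`. Any `c ∈ S(a,B) \ S(a'',B)` then lies strictly between `b` and `b'`.
-/

/-- A shuffling relation between linear orders `A` and `B`: a nonempty relation such that
the fibers `S(A,b)` form a strictly increasing family of initial segments of `A`, none of
which has a supremum in `A`, and the fibers `S(a,B)` form a strictly decreasing family of
final segments of `B`. -/
def IsShuffling {A B : Type*} [LinearOrder A] [LinearOrder B] (S : A → B → Prop) : Prop :=
  (∃ (a : A) (b : B), S a b) ∧
  (∀ (b : B) (x : A), S x b → ∀ y : A, y ≤ x → S y b) ∧
  (∀ b b' : B, b < b' → {x : A | S x b} ⊂ {x : A | S x b'}) ∧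
  (∀ b : B, ¬ ∃ a : A, IsLUB {x : A | S x b} a) ∧
  (∀ (a : A) (y : B), S a y → ∀ y' : B, y ≤ y' → S a y') ∧
  (∀ a a' : A, a < a' → {y : B | S a' y} ⊂ {y : B | S a y})

theorem exists_between_of_forall_not_isLUB {α : Type*} [LinearOrder α] {s : Set α}
    (hs : ∀ x, ¬ IsLUB s x) {a b : α} (ha : a ∈ s) (hb : b ∈ upperBounds s) :
    ∃ c, a < c ∧ c < b := by
  obtain ⟨u, hu, hub⟩ : ∃ u ∈ upperBounds s, u < b := by
    by_contra! h
    exact hs b ⟨hb, h⟩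
  refine ⟨u, (hu ha).lt_of_ne ?_, hub⟩
  rintro rfl
  exact hs a ⟨hu, fun _ hx => hx ha⟩

namespace IsShuffling

variable {A B : Type*} [LinearOrder A] [LinearOrder B] {S : A → B → Prop}

theorem of_le_left (hS : IsShuffling S) {x y : A} {b : B} (h : S x b) (hyx : y ≤ x) : S y b :=
  hS.2.1 b x h y hyx

theorem of_le_right (hS : IsShuffling S) {a : A} {y y' : B} (h : S a y) (hyy' : y ≤ y') :
    S a y' :=
  hS.2.2.2.2.1 a y h y' hyy'

theorem exists_mem_fiber_not_mem_of_lt_right (hS : IsShuffling S) {b b' : B} (h : b < b') :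
    ∃ a, S a b' ∧ ¬ S a b :=
  Set.exists_of_ssubset (hS.2.2.1 b b' h)

theorem exists_mem_fiber_not_mem_of_lt_left (hS : IsShuffling S) {a a' : A} (h : a < a') :
    ∃ b, S a b ∧ ¬ S a' b :=
  Set.exists_of_ssubset (hS.2.2.2.2.2 a a' h)

theorem not_isLUB_fiber (hS : IsShuffling S) (b : B) (a : A) : ¬ IsLUB {x | S x b} a :=
  fun h => hS.2.2.2.1 b ⟨a, h⟩

theorem mem_upperBounds_fiber_of_not_mem (hS : IsShuffling S) {a : A} {b : B} (h : ¬ S a b) :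
    a ∈ upperBounds {x | S x b} := fun _ hx =>
  le_of_not_ge fun hax => h (hS.of_le_left hx hax)

theorem exists_gt_mem_fiber (hS : IsShuffling S) {a : A} {b : B} (h : S a b) :
    ∃ a', a < a' ∧ S a' b := by
  by_contra! hmax
  exact hS.not_isLUB_fiber b a (IsGreatest.isLUB ⟨h, fun x hx => le_of_not_gt (hmax x · hx)⟩)

theorem denselyOrdered_left (hS : IsShuffling S) : DenselyOrdered A where
  dense a a' h := by
    obtain ⟨b, hab, ha'b⟩ := hS.exists_mem_fiber_not_mem_of_lt_left h
    exact exists_between_of_forall_not_isLUB (hS.not_isLUB_fiber b) hab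
      (hS.mem_upperBounds_fiber_of_not_mem ha'b)

theorem denselyOrdered_right (hS : IsShuffling S) : DenselyOrdered B where
  dense b b' h := by
    obtain ⟨a, hab', hab⟩ := hS.exists_mem_fiber_not_mem_of_lt_right h
    obtain ⟨a'', haa'', ha''b'⟩ := hS.exists_gt_mem_fiber hab'
    obtain ⟨c, hac, ha''c⟩ := hS.exists_mem_fiber_not_mem_of_lt_left haa''
    exact ⟨c, lt_of_not_ge fun hcb => hab (hS.of_le_right hac hcb),
      lt_of_not_ge fun hb'c => ha''c (hS.of_le_right ha''b' hb'c)⟩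

end IsShuffling

theorem stmt_3 {A B : Type*} [LinearOrder A] [LinearOrder B] (S : A → B → Prop)
    (hS : IsShuffling S) :
    (∀ a a' : A, a < a' → ∃ c : A, a < c ∧ c < a') ∧
    (∀ b b' : B, b < b' → ∃ c : B, b < c ∧ c < b') :=
  ⟨fun _ _ => hS.denselyOrdered_left.dense _ _, fun _ _ => hS.denselyOrdered_right.dense _ _⟩
end

section
/- If S ⊆ A × B is a shuffling relation between linear orders (A,<_A) and (B,<_B), then for every a ∈ A the fiber S(a,B) = {y ∈ B | (a,y) ∈ S} has no infimum in B. -/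
/-!
Let `m` be the infimum of `S(a,B)`. Every `x ∈ S(A,m)` satisfies `x ≤ a`: otherwise some
`y ∈ S(a,B) \ S(x,B)` lies above `m`, and `S(x,B)` is a final segment containing `m`. As `S(A,m)`
has no supremum, `a` is not its least upper bound, so there is an upper bound `u < a`. Any
`y ∈ S(u,B) \ S(a,B)` lies below the final segment `S(a,B)`, hence `y ≤ m` and `u ∈ S(A,m)`:
then `u` is the greatest element, hence the supremum, of `S(A,m)`.
-/

theorem IsUpperSet.mem_lowerBounds_of_notMem {B : Type*} [LinearOrder B] {s : Set B}
    (hs : IsUpperSet s) {y : B} (hy : y ∉ s) : y ∈ lowerBounds s :=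
  fun _ hz ↦ le_of_not_ge fun hzy ↦ hy (hs hzy hz)

theorem exists_lt_mem_upperBounds_of_not_isLUB {A : Type*} [LinearOrder A] {s : Set A} {a : A}
    (ha : a ∈ upperBounds s) (hlub : ¬ IsLUB s a) : ∃ u ∈ upperBounds s, u < a := by
  by_contra! h
  exact hlub ⟨ha, h⟩

section Fibers

variable {A B : Type*} [LinearOrder A] [LinearOrder B] {S : A → B → Prop}

theorem mem_upperBounds_fiber_of_isGLB (hfin : ∀ a, IsUpperSet {y | S a y})
    (hdec : StrictAnti fun a ↦ {y | S a y}) {a : A} {m : B} (hm : IsGLB {y | S a y} m) :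
    a ∈ upperBounds {x | S x m} := by
  intro x hx
  by_contra! hax
  obtain ⟨y, hay, hxy⟩ := Set.exists_of_ssubset (hdec hax)
  exact hxy (hfin x (hm.1 hay) hx)

theorem exists_isLUB_fiber_of_isGLB (hfin : ∀ a, IsUpperSet {y | S a y})
    (hdec : StrictAnti fun a ↦ {y | S a y}) {a : A} {m : B} (hm : IsGLB {y | S a y} m) :
    ∃ c, IsLUB {x | S x m} c := by
  have ha := mem_upperBounds_fiber_of_isGLB hfin hdec hm
  by_cases hlub : IsLUB {x | S x m} a
  · exact ⟨a, hlub⟩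
  obtain ⟨u, hu, hua⟩ := exists_lt_mem_upperBounds_of_not_isLUB ha hlub
  obtain ⟨y, huy, hay⟩ := Set.exists_of_ssubset (hdec hua)
  have hym : y ≤ m := hm.2 ((hfin a).mem_lowerBounds_of_notMem hay)
  have hum : S u m := hfin u hym huy
  exact ⟨u, IsGreatest.isLUB ⟨hum, hu⟩⟩

end Fibers

theorem stmt_4 {A B : Type*} [LinearOrder A] [LinearOrder B] (S : A → B → Prop)
    (hS : IsShuffling S) :
    ∀ a : A, ¬ ∃ m : B, IsGLB {y : B | S a y} m := by
  obtain ⟨-, -, -, hnosup, hfin, hdec⟩ := hS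
  rintro a ⟨m, hm⟩
  exact hnosup m (exists_isLUB_fiber_of_isGLB (fun a _ _ hle hy ↦ hfin a _ hy _ hle)
    (fun _ _ h ↦ hdec _ _ h) hm)
end

section
/- Suppose S ⊆ A × B is a shuffling relation between linear orders (A,<_A) and (B,<_B). Define π_A : A → 𝔇(A) by π_A(a) = {x ∈ A | x <_A a} and π_B : B → 𝔇(A) by π_B(b) = S(A,b). Then π_A and π_B are order embeddings of (A,<_A) and (B,<_B) respectively into the Dedekind completion (𝔇(A),⊂). -/
/-- An open initial segment of a linear order: a downward closed set with no greatest
element.  The collection of all such sets, ordered by inclusion, is the Dedekind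
completion `𝔇(A)`. -/
def OpenInitial {A : Type*} [LinearOrder A] (I : Set A) : Prop :=
  (∀ x ∈ I, ∀ y, y ≤ x → y ∈ I) ∧ ∀ x ∈ I, ∃ y ∈ I, x < y

/-!
Both fibers of `S` and the sets `Iio a` are open initial segments: a fiber with a greatest
element would have it as supremum, and `A` is dense because a gap `x < a` would make `x` the
greatest element of any fiber `S(A,b)` containing `x` but not `a`. Both maps are strictly
monotone, and a strictly monotone map out of a linear order also reflects `<`.
-/

theorem openInitial_Iio {A : Type*} [LinearOrder A] [DenselyOrdered A] (a : A) :
    OpenInitial (Set.Iio a) :=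
  ⟨fun _ hx _ hy => lt_of_le_of_lt hy hx, fun _ hx => (exists_between hx).imp fun _ h => ⟨h.2, h.1⟩⟩

theorem strictMono_Iio {A : Type*} [Preorder A] : StrictMono (Set.Iio : A → Set A) :=
  fun _ _ => Set.Iio_ssubset_Iio

namespace IsShuffling

variable {A B : Type*} [LinearOrder A] [LinearOrder B] {S : A → B → Prop}

theorem not_isGreatest_fiber (hS : IsShuffling S) (b : B) (x : A) :
    ¬ IsGreatest {y | S y b} x :=
  fun h => hS.2.2.2.1 b ⟨x, h.isLUB⟩

theorem denselyOrdered (hS : IsShuffling S) : DenselyOrdered A := by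
  refine ⟨fun x a hxa => ?_⟩
  by_contra! hgap
  obtain ⟨b, hxb, hab⟩ := Set.exists_of_ssubset (hS.2.2.2.2.2 x a hxa)
  refine hS.not_isGreatest_fiber b x ⟨hxb, fun z hz => ?_⟩
  by_contra! hxz
  exact hab (hS.2.1 b z hz a (hgap z hxz))

theorem openInitial_fiber (hS : IsShuffling S) (b : B) : OpenInitial {x | S x b} := by
  refine ⟨hS.2.1 b, fun x hx => ?_⟩
  by_contra! hmax
  exact hS.not_isGreatest_fiber b x ⟨hx, hmax⟩

theorem strictMono_fiber (hS : IsShuffling S) : StrictMono fun b x => S x b :=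
  hS.2.2.1

end IsShuffling

theorem stmt_6 {A B : Type*} [LinearOrder A] [LinearOrder B] (S : A → B → Prop)
    (hS : IsShuffling S) :
    -- π_A and π_B map into 𝔇(A)
    (∀ a : A, OpenInitial {x : A | x < a}) ∧
    (∀ b : B, OpenInitial {x : A | S x b}) ∧
    -- π_A is an order embedding of (A,<) into (𝔇(A),⊂)
    (∀ a a' : A, a < a' ↔ {x : A | x < a} ⊂ {x : A | x < a'}) ∧
    -- π_B is an order embedding of (B,<) into (𝔇(A),⊂)
    (∀ b b' : B, b < b' ↔ {x : A | S x b} ⊂ {x : A | S x b'}) := by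
  have := hS.denselyOrdered
  exact ⟨openInitial_Iio, hS.openInitial_fiber, fun _ _ => strictMono_Iio.lt_iff_lt.symm,
    fun _ _ => hS.strictMono_fiber.lt_iff_lt.symm⟩
end

section
/- Suppose S ⊆ A × B is a shuffling relation between linear orders (A,<_A) and (B,<_B), and let π_A(a) = {x ∈ A | x <_A a} and π_B(b) = S(A,b) be the canonical embeddings into 𝔇(A). Then the images π_A(A) and π_B(B) are disjoint subsets of 𝔇(A), and each is topologically dense in 𝔇(A) (between any two distinct elements of 𝔇(A) there is an element of π_A(A), and also an element of π_B(B)). -/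
open Set

section LinearOrder

variable {A : Type*} [LinearOrder A]

theorem exists_isLUB_Iio (a : A) : ∃ c, IsLUB (Iio a) c := by
  by_cases h : ∃ c, IsGreatest (Iio a) c
  · obtain ⟨c, hc⟩ := h
    exact ⟨c, hc.isLUB⟩
  · refine ⟨a, fun x hx => le_of_lt hx, fun u hu => ?_⟩
    by_contra! hua
    exact h ⟨u, hua, hu⟩

theorem IsLowerSet.ssubset_of_mem_of_notMem {I K : Set A} (hI : IsLowerSet I)
    (hK : IsLowerSet K) {z : A} (hzK : z ∈ K) (hzI : z ∉ I) : I ⊂ K := by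
  refine ⟨fun x hx => hK (le_of_lt ?_) hzK, fun hKI => hzI (hKI hzK)⟩
  by_contra! hzx
  exact hzI (hI hzx hx)

theorem OpenInitial.isLowerSet {I : Set A} (hI : OpenInitial I) : IsLowerSet I :=
  fun _ y hyx hx => hI.1 _ hx y hyx

end LinearOrder

namespace IsShuffling

variable {A B : Type*} [LinearOrder A] [LinearOrder B] {S : A → B → Prop}

theorem isLowerSet_fiber (hS : IsShuffling S) (b : B) : IsLowerSet {x : A | S x b} :=
  fun x y hyx hx => hS.2.1 b x hx y hyx

theorem fiber_ne_Iio (hS : IsShuffling S) (a : A) (b : B) : {x : A | S x b} ≠ Iio a := by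
  intro h
  apply hS.2.2.2.1 b
  rw [h]
  exact exists_isLUB_Iio a

theorem exists_fiber_mem_notMem (hS : IsShuffling S) {z w : A} (hzw : z < w) :
    ∃ b, S z b ∧ ¬ S w b :=
  exists_of_ssubset (hS.2.2.2.2.2 z w hzw)

end IsShuffling

theorem stmt_7 {A B : Type*} [LinearOrder A] [LinearOrder B] (S : A → B → Prop)
    (hS : IsShuffling S) :
    -- the images of π_A and π_B are disjoint
    (∀ (a : A) (b : B), {x : A | x < a} ≠ {x : A | S x b}) ∧
    -- each image is topologically dense in 𝔇(A)
    (∀ I J : Set A, OpenInitial I → OpenInitial J → I ⊂ J →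
      (∃ a : A, I ⊂ {x : A | x < a} ∧ {x : A | x < a} ⊂ J) ∧
      (∃ b : B, I ⊂ {x : A | S x b} ∧ {x : A | S x b} ⊂ J)) := by
  refine ⟨fun a b => (hS.fiber_ne_Iio a b).symm, fun I J hI hJ hIJ => ?_⟩
  obtain ⟨z, hzJ, hzI⟩ := exists_of_ssubset hIJ
  obtain ⟨w, hwJ, hzw⟩ := hJ.2 z hzJ
  have hIlower := hI.isLowerSet
  have hJlower := hJ.isLowerSet
  obtain ⟨b, hzb, hwb⟩ := hS.exists_fiber_mem_notMem hzw
  have hblower := hS.isLowerSet_fiber b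
  exact ⟨⟨w, hIlower.ssubset_of_mem_of_notMem (isLowerSet_Iio w) hzw hzI,
      (isLowerSet_Iio w).ssubset_of_mem_of_notMem hJlower hwJ (lt_irrefl w)⟩,
    ⟨b, hIlower.ssubset_of_mem_of_notMem hblower hzb hzI,
      hblower.ssubset_of_mem_of_notMem hJlower hwJ hwb⟩⟩
end

section
/- Suppose S ⊆ A × B is a shuffling relation between linear orders (A,<_A) and (B,<_B), with canonical embeddings π_A(a) = {x ∈ A | x <_A a} and π_B(b) = S(A,b) into 𝔇(A). Then for all a ∈ A and b ∈ B: π_A(a) ⊊ π_B(b) if and only if (a,b) ∈ S. -/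
theorem IsLowerSet.Iio_ssubset_iff {α : Type*} [LinearOrder α] {s : Set α} (hs : IsLowerSet s)
    {a : α} : Set.Iio a ⊂ s ↔ a ∈ s := by
  constructor
  · rintro ⟨-, hs_not_sub⟩
    obtain ⟨x, hx, hxa⟩ := Set.not_subset.mp hs_not_sub
    exact hs (not_lt.mp hxa) hx
  · intro ha
    exact ⟨fun x hx => hs hx.le ha, fun h => lt_irrefl a (h ha)⟩

theorem IsShuffling.isLowerSet_fiber_s9 {A B : Type*} [LinearOrder A] [LinearOrder B]
    {S : A → B → Prop} (hS : IsShuffling S) (b : B) : IsLowerSet {x : A | S x b} :=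
  fun x _ hyx hx => hS.2.1 b x hx _ hyx

theorem stmt_9 {A B : Type*} [LinearOrder A] [LinearOrder B] (S : A → B → Prop)
    (hS : IsShuffling S) :
    ∀ (a : A) (b : B), {x : A | x < a} ⊂ {x : A | S x b} ↔ S a b :=
  fun _ b => (hS.isLowerSet_fiber_s9 b).Iio_ssubset_iff
end

section
/- Let ((A_i,<_i))_{i<α} be a family of linear orders shuffled by a coherent family of shuffling relations (S_{i,j} ⊆ A_i × A_j)_{i<j<α}, meaning each S_{i,j} is a shuffling relation and S_{j,k} ∘ S_{i,j} = S_{i,k} for all i<j<k<α. Define π_0(x) = {y ∈ A_0 | y <_0 x} and π_i(x) = S_{0,i}(A_0,x) = {y ∈ A_0 | (y,x) ∈ S_{0,i}} for 0 < i < α. Then the images π_i(A_i), for i < α, are pairwise disjoint subsets of the Dedekind completion 𝔇(A_0). -/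
theorem exists_isLUB_Iio_s11 {α : Type*} [LinearOrder α] (x : α) : ∃ a, IsLUB (Set.Iio x) a := by
  by_cases hx : x ∈ lowerBounds (upperBounds (Set.Iio x))
  · exact ⟨x, fun _ => le_of_lt, hx⟩
  · obtain ⟨b, hb, hbx⟩ : ∃ b ∈ upperBounds (Set.Iio x), ¬ x ≤ b := by
      simpa [lowerBounds] using hx
    exact ⟨b, IsGreatest.isLUB ⟨lt_of_not_ge hbx, hb⟩⟩

theorem StrictMono.apply_ne_biSup_of_not_isLUB {β α : Type*} [LinearOrder β] [CompleteLattice α]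
    {f : β → α} (hf : StrictMono f) {s : Set β} (hs : ∀ b, ¬ IsLUB s b) (b : β) :
    f b ≠ ⨆ b' ∈ s, f b' := by
  intro heq
  have hbound : b ∈ upperBounds s := fun b' hb' =>
    le_of_not_gt fun hlt => (hf hlt).not_ge (heq ▸ le_biSup f hb')
  obtain ⟨b₀, hb₀, hb₀b⟩ : ∃ b₀ ∈ upperBounds s, b₀ < b := by
    by_contra! h
    exact hs b ⟨hbound, h⟩
  have hsup_le : ⨆ b' ∈ s, f b' ≤ f b₀ := iSup₂_le fun b' hb' => hf.monotone (hb₀ hb')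
  exact (hf hb₀b).not_ge (heq ▸ hsup_le)

section IsShuffling

variable {A B C : Type*} [LinearOrder A] [LinearOrder B] [LinearOrder C]

theorem IsShuffling.strictMono_fiber_s11 {S : A → B → Prop} (hS : IsShuffling S) :
    StrictMono fun b => {a | S a b} :=
  hS.2.2.1

theorem IsShuffling.not_isLUB_fiber_s11 {S : A → B → Prop} (hS : IsShuffling S) (b : B) (a : A) :
    ¬ IsLUB {x | S x b} a :=
  fun h => hS.2.2.2.1 b ⟨a, h⟩

theorem IsShuffling.fiber_ne_fiber_comp {R : A → B → Prop} {T : B → C → Prop}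
    (hR : IsShuffling R) (hT : IsShuffling T) (b : B) (c : C) :
    {a | R a b} ≠ {a | ∃ b', R a b' ∧ T b' c} := by
  have hunion : {a | ∃ b', R a b' ∧ T b' c} = ⨆ b' ∈ {b' | T b' c}, {a | R a b'} := by
    ext a
    simp [and_comm]
  rw [hunion]
  exact hR.strictMono_fiber_s11.apply_ne_biSup_of_not_isLUB (hT.not_isLUB_fiber_s11 c) b

end IsShuffling

theorem stmt_11 {ι : Type*} [LinearOrder ι] [OrderBot ι]
    (A : ι → Type*) [∀ i, LinearOrder (A i)]
    (S : ∀ i j : ι, A i → A j → Prop)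
    (hsh : ∀ i j : ι, i < j → IsShuffling (S i j))
    (hcoh : ∀ i j k : ι, i < j → j < k → ∀ (a : A i) (c : A k),
      S i k a c ↔ ∃ b : A j, S i j a b ∧ S j k b c)
    (π : ∀ i, A i → Set (A ⊥))
    (hπ0 : ∀ x : A ⊥, π ⊥ x = {y : A ⊥ | y < x})
    (hπ : ∀ i : ι, ⊥ < i → ∀ x : A i, π i x = {y : A ⊥ | S ⊥ i y x}) :
    ∀ i j : ι, i ≠ j → ∀ (x : A i) (y : A j), π i x ≠ π j y := by
  suffices h : ∀ i j : ι, i < j → ∀ (x : A i) (y : A j), π i x ≠ π j y by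
    intro i j hij x y
    rcases hij.lt_or_gt with hlt | hgt
    · exact h i j hlt x y
    · exact (h j i hgt y x).symm
  intro i j hij x y
  have hj : ⊥ < j := bot_le.trans_lt hij
  rcases (bot_le : ⊥ ≤ i).eq_or_lt with rfl | hi
  · intro heq
    obtain ⟨a, ha⟩ := exists_isLUB_Iio_s11 x
    rw [← Set.Iio_def, ← hπ0, heq, hπ j hj] at ha
    exact (hsh ⊥ j hj).not_isLUB_fiber_s11 y a ha
  · rw [hπ i hi, hπ j hj]
    simp_rw [hcoh ⊥ i j hi hij]
    exact (hsh ⊥ i hi).fiber_ne_fiber_comp (hsh i j hij) x y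
end

section
/- Let ((A_i,<_i))_{i<α} be a family of linear orders shuffled by a coherent family of shuffling relations (S_{i,j})_{i<j<α} (each S_{i,j} a shuffling relation with S_{j,k} ∘ S_{i,j} = S_{i,k}), with canonical embeddings π_i into 𝔇(A_0) given by π_0(x) = {y | y <_0 x} and π_i(x) = S_{0,i}(A_0,x). Then for all i < j < α, a_i ∈ A_i and a_j ∈ A_j: π_i(a_i) ⊊ π_j(a_j) if and only if (a_i,a_j) ∈ S_{i,j}. -/
namespace IsShuffling

variable {A B C : Type*} [LinearOrder A] [LinearOrder B] [LinearOrder C]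

theorem rel_of_le_left {R : A → B → Prop} (hR : IsShuffling R) {x y : A} {b : B}
    (hx : R x b) (hyx : y ≤ x) : R y b :=
  hR.2.1 b x hx y hyx

theorem setOf_ssubset_setOf {R : A → B → Prop} (hR : IsShuffling R) {b b' : B} (h : b < b') :
    {x | R x b} ⊂ {x | R x b'} :=
  hR.2.2.1 b b' h

theorem setOf_subset_setOf {R : A → B → Prop} (hR : IsShuffling R) {b b' : B} (h : b ≤ b') :
    {x | R x b} ⊆ {x | R x b'} := by
  rcases h.lt_or_eq with h | rfl
  · exact (hR.setOf_ssubset_setOf h).subset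
  · exact subset_rfl

/-- A maximal point of a fiber `S(A,b)` would be its supremum. -/
theorem exists_gt_of_rel {R : A → B → Prop} (hR : IsShuffling R) {a : A} {b : B} (hab : R a b) :
    ∃ m, R m b ∧ a < m := by
  by_contra! h
  exact hR.2.2.2.1 b ⟨a, fun x hx => h x hx, fun _ hu => hu hab⟩

theorem Iio_ssubset_setOf_iff {R : A → B → Prop} (hR : IsShuffling R) (a : A) (b : B) :
    Set.Iio a ⊂ {x | R x b} ↔ R a b := by
  constructor
  · rintro ⟨-, hne⟩
    obtain ⟨y, hy, hya⟩ := Set.not_subset.mp hne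
    exact hR.rel_of_le_left hy (not_lt.mp hya)
  · intro hab
    exact ⟨fun y hy => hR.rel_of_le_left hab hy.le, fun h => lt_irrefl a (h hab)⟩

theorem setOf_ssubset_setOf_comp_iff {R : A → B → Prop} {T : B → C → Prop}
    (hR : IsShuffling R) (hT : IsShuffling T) (b : B) (c : C) :
    {x | R x b} ⊂ {x | ∃ m, R x m ∧ T m c} ↔ T b c := by
  constructor
  · rintro ⟨-, hne⟩
    obtain ⟨y, ⟨m, hym, hmc⟩, hyb⟩ := Set.not_subset.mp hne
    have hbm : b < m := lt_of_not_ge fun hmb => hyb (hR.setOf_subset_setOf hmb hym)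
    exact hT.rel_of_le_left hmc hbm.le
  · intro hbc
    obtain ⟨m, hmc, hbm⟩ := hT.exists_gt_of_rel hbc
    obtain ⟨y, hym, hyb⟩ := Set.exists_of_ssubset (hR.setOf_ssubset_setOf hbm)
    exact ⟨fun x hx => ⟨b, hx, hbc⟩, fun h => hyb (h ⟨m, hym, hmc⟩)⟩

end IsShuffling

theorem stmt_12 {ι : Type*} [LinearOrder ι] [OrderBot ι]
    (A : ι → Type*) [∀ i, LinearOrder (A i)]
    (S : ∀ i j : ι, A i → A j → Prop)
    (hsh : ∀ i j : ι, i < j → IsShuffling (S i j))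
    (hcoh : ∀ i j k : ι, i < j → j < k → ∀ (a : A i) (c : A k),
      S i k a c ↔ ∃ b : A j, S i j a b ∧ S j k b c)
    (π : ∀ i, A i → Set (A ⊥))
    (hπ0 : ∀ x : A ⊥, π ⊥ x = {y : A ⊥ | y < x})
    (hπ : ∀ i : ι, ⊥ < i → ∀ x : A i, π i x = {y : A ⊥ | S ⊥ i y x}) :
    ∀ i j : ι, i < j → ∀ (a : A i) (b : A j), π i a ⊂ π j b ↔ S i j a b := by
  intro i j hij a b
  rcases eq_bot_or_bot_lt i with rfl | hbi
  · rw [hπ0, hπ j hij]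
    exact (hsh ⊥ j hij).Iio_ssubset_setOf_iff a b
  · have hcomp : {y | S ⊥ j y b} = {y | ∃ m, S ⊥ i y m ∧ S i j m b} :=
      Set.ext fun y => hcoh ⊥ i j hbi hij y b
    rw [hπ i hbi, hπ j (hbi.trans hij), hcomp]
    exact (hsh ⊥ i hbi).setOf_ssubset_setOf_comp_iff (hsh i j hij) a b
end

section
/- Let ((A_i,<_{A_i}))_{i<α} and ((B_i,<_{B_i}))_{i<α} (α ≤ ω) be countable sequences of countable linear orders, shuffled by coherent families of shuffling relations (S^A_{i,j})_{i<j<α} and (S^B_{i,j})_{i<j<α} respectively. If (A_i,<_{A_i}) ≅ (B_i,<_{B_i}) for all i < α, then there exist order isomorphisms f_i : A_i → B_i such that for all i < j < α, x ∈ A_i and y ∈ A_j: (x,y) ∈ S^A_{i,j} if and only if (f_i(x),f_j(y)) ∈ S^B_{i,j}. -/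
/-!
Glue the orders `A i` into a single linear order on `Σ i, A i`: for `i < j` put
`⟨i, a⟩ < ⟨j, b⟩` when `S i j a b` and `⟨j, b⟩ < ⟨i, a⟩` otherwise; coherence is exactly what
makes this transitive. As soon as there are two indices, the shuffling axioms make every index
dense in the glued order: between any two points lies a point of each index. The glued order is
countable, so back and forth along finite partial isomorphisms that preserve indices and endpoints
yields an index-preserving isomorphism between the glued orders of the `A i` and of the `B i`,
provided the endpoints of the two sides carry the same indices. This depends only on which `A i`
have a least or greatest element, which the isomorphisms `A i ≃o B i` settle. The restrictions of
the glued isomorphism to the fibres are the required `f i`.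
-/

namespace Order

variable {α β κ : Type*} [LinearOrder α] [LinearOrder β]

theorem PartialIso.cmp_insert (f : PartialIso α β) {a : α} {b : β}
    (h : ∀ p ∈ f.val, cmp p.1 a = cmp p.2 b) :
    ∀ p ∈ insert (a, b) f.val, ∀ q ∈ insert (a, b) f.val, cmp p.1 q.1 = cmp p.2 q.2 := by
  intro p hp q hq
  rw [Finset.mem_insert] at hp hq
  rcases hp with rfl | hp <;> rcases hq with rfl | hq
  · simp only [cmp_self_eq_eq]
  · rw [cmp_eq_cmp_symm]
    exact h q hq
  · exact h p hp
  · exact f.prop p hp q hq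

theorem exists_orderIso_of_forth_of_back [Countable α] [Countable β] (Q : α → β → Prop)
    (forth : ∀ f : PartialIso α β, (∀ p ∈ f.val, Q p.1 p.2) → ∀ a,
      ∃ b, Q a b ∧ ∀ p ∈ f.val, cmp p.1 a = cmp p.2 b)
    (back : ∀ f : PartialIso α β, (∀ p ∈ f.val, Q p.1 p.2) → ∀ b,
      ∃ a, Q a b ∧ ∀ p ∈ f.val, cmp p.1 a = cmp p.2 b) :
    ∃ e : α ≃o β, ∀ a, Q a (e a) := by
  classical
  cases nonempty_encodable α
  cases nonempty_encodable β
  let P := {f : PartialIso α β // ∀ p ∈ f.val, Q p.1 p.2}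
  have extend (f : P) {a : α} {b : β} (hQ : Q a b) (h : ∀ p ∈ f.1.val, cmp p.1 a = cmp p.2 b) :
      ∃ g : P, (a, b) ∈ g.1.val ∧ f ≤ g :=
    ⟨⟨⟨_, f.1.cmp_insert h⟩, by simpa [hQ] using f.2⟩, Finset.mem_insert_self _ _,
      Finset.subset_insert _ _⟩
  let cofinal : α ⊕ β → Cofinal P := Sum.elim
    (fun a => ⟨{f | ∃ b, (a, b) ∈ f.1.val}, fun f =>
      let ⟨b, hQ, h⟩ := forth f.1 f.2 a
      let ⟨g, hg, hfg⟩ := extend f hQ h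
      ⟨g, ⟨b, hg⟩, hfg⟩⟩)
    (fun b => ⟨{f | ∃ a, (a, b) ∈ f.1.val}, fun f =>
      let ⟨a, hQ, h⟩ := back f.1 f.2 b
      let ⟨g, hg, hfg⟩ := extend f hQ h
      ⟨g, ⟨a, hg⟩, hfg⟩⟩)
  let empty : P := ⟨default, by simp [default]⟩
  let I := idealOfCofinals empty cofinal
  have meets := cofinal_meets_idealOfCofinals empty cofinal
  have compat : ∀ f ∈ I, ∀ g ∈ I, ∀ p ∈ f.1.val, ∀ q ∈ g.1.val, cmp p.1 q.1 = cmp p.2 q.2 := by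
    intro f hf g hg p hp q hq
    obtain ⟨h, -, hfh, hgh⟩ := I.directed f hf g hg
    exact h.1.2 p (hfh hp) q (hgh hq)
  have left (a : α) : ∃ b, ∃ f ∈ I, (a, b) ∈ f.1.val :=
    let ⟨f, ⟨b, hb⟩, hfI⟩ := meets (.inl a)
    ⟨b, f, hfI, hb⟩
  have right (b : β) : ∃ a, ∃ g ∈ I, (a, b) ∈ g.1.val :=
    let ⟨g, ⟨a, ha⟩, hgI⟩ := meets (.inr b)
    ⟨a, g, hgI, ha⟩
  choose F f hfI hf using left
  choose G g hgI hg using right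
  exact ⟨OrderIso.ofCmpEqCmp F G fun a b => compat _ (hfI a) _ (hgI b) _ (hf a) _ (hg b),
    fun a => (f a).2 _ (hf a)⟩

variable (c : α → κ) (d : β → κ)

def IsDenseColoring : Prop :=
  ∀ a b : α, a < b → ∀ k, ∃ x, a < x ∧ x < b ∧ c x = k

structure IsCounterpart (a : α) (b : β) : Prop where
  color_eq : d b = c a
  isMax_iff : IsMax a ↔ IsMax b
  isMin_iff : IsMin a ↔ IsMin b

variable {c d}

theorem IsCounterpart.symm {a : α} {b : β} (h : IsCounterpart c d a b) : IsCounterpart d c b a :=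
  ⟨h.color_eq.symm, h.isMax_iff.symm, h.isMin_iff.symm⟩

theorem PartialIso.forall_mem_comm {f : PartialIso α β} {P : β × α → Prop} :
    (∀ p ∈ f.comm.val, P p) ↔ ∀ p ∈ f.val, P p.swap :=
  Finset.forall_mem_image

theorem exists_lt_between_finsets [Nontrivial β] (lo hi : Finset β)
    (hlo : ∀ y ∈ lo, ¬IsMax y) (hhi : ∀ z ∈ hi, ¬IsMin z) (h : ∀ y ∈ lo, ∀ z ∈ hi, y < z) :
    ∃ a b, a < b ∧ (∀ y ∈ lo, y ≤ a) ∧ ∀ z ∈ hi, b ≤ z := by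
  rcases lo.eq_empty_or_nonempty with rfl | hlo'
  · rcases hi.eq_empty_or_nonempty with rfl | hhi'
    · obtain ⟨a, b, hab⟩ := exists_pair_lt β
      exact ⟨a, b, hab, by simp, by simp⟩
    · obtain ⟨a, ha⟩ := not_isMin_iff.1 (hhi _ (hi.min'_mem hhi'))
      exact ⟨a, _, ha, by simp, hi.min'_le⟩
  · rcases hi.eq_empty_or_nonempty with rfl | hhi'
    · obtain ⟨b, hb⟩ := not_isMax_iff.1 (hlo _ (lo.max'_mem hlo'))
      exact ⟨_, b, hb, lo.le_max', by simp⟩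
    · exact ⟨_, _, h _ (lo.max'_mem hlo') _ (hi.min'_mem hhi'), lo.le_max', hi.min'_le⟩

section Across

variable {f : PartialIso α β} (hf : ∀ p ∈ f.val, IsCounterpart c d p.1 p.2) {a : α}
  (hdom : ∀ p ∈ f.val, p.1 ≠ a)
include hf hdom

theorem cmp_eq_cmp_of_isMax {b : β} (ha : IsMax a) (hb : IsMax b) :
    ∀ p ∈ f.val, cmp p.1 a = cmp p.2 b := fun p hp => by
  have hpa : p.1 < a := (ha.isTop p.1).lt_of_ne (hdom p hp)
  have hpb : p.2 < b := (hb.isTop p.2).lt_of_ne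
    fun h => hpa.not_isMax ((hf p hp).isMax_iff.2 (h ▸ hb))
  rw [(cmp_eq_lt_iff _ _).2 hpa, (cmp_eq_lt_iff _ _).2 hpb]

theorem cmp_eq_cmp_of_isMin {b : β} (ha : IsMin a) (hb : IsMin b) :
    ∀ p ∈ f.val, cmp p.1 a = cmp p.2 b := fun p hp => by
  have hpa : a < p.1 := (ha.isBot p.1).lt_of_ne (hdom p hp).symm
  have hpb : b < p.2 := (hb.isBot p.2).lt_of_ne
    fun h => hpa.not_isMin ((hf p hp).isMin_iff.2 (h ▸ hb))
  rw [(cmp_eq_gt_iff _ _).2 hpa, (cmp_eq_gt_iff _ _).2 hpb]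

theorem exists_cmp_eq_cmp_of_isDenseColoring [Nontrivial β] (hd : IsDenseColoring d) (k : κ) :
    ∃ b, d b = k ∧ ¬IsMax b ∧ ¬IsMin b ∧ ∀ p ∈ f.val, cmp p.1 a = cmp p.2 b := by
  obtain ⟨y, z, hyz, hlo, hhi⟩ := exists_lt_between_finsets
    ((f.val.filter (·.1 < a)).image Prod.snd) ((f.val.filter (a < ·.1)).image Prod.snd)
    (by
      simp only [Finset.forall_mem_image, Finset.mem_filter]
      exact fun p ⟨hp, hpa⟩ hmax => hpa.not_isMax ((hf p hp).isMax_iff.2 hmax))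
    (by
      simp only [Finset.forall_mem_image, Finset.mem_filter]
      exact fun p ⟨hp, hpa⟩ hmin => hpa.not_isMin ((hf p hp).isMin_iff.2 hmin))
    (by
      simp only [Finset.forall_mem_image, Finset.mem_filter]
      exact fun p ⟨hp, hpa⟩ q ⟨hq, hqa⟩ =>
        (lt_iff_lt_of_cmp_eq_cmp (f.prop p hp q hq)).1 (hpa.trans hqa))
  obtain ⟨b, hyb, hbz, hb⟩ := hd y z hyz k
  refine ⟨b, hb, hbz.not_isMax, hyb.not_isMin, fun p hp => ?_⟩
  rcases (hdom p hp).lt_or_gt with hpa | hpa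
  · have hpb : p.2 < b :=
      (hlo _ (Finset.mem_image_of_mem _ (by simpa [hp] using hpa))).trans_lt hyb
    rw [(cmp_eq_lt_iff _ _).2 hpa, (cmp_eq_lt_iff _ _).2 hpb]
  · have hpb : b < p.2 :=
      hbz.trans_le (hhi _ (Finset.mem_image_of_mem _ (by simpa [hp] using hpa)))
    rw [(cmp_eq_gt_iff _ _).2 hpa, (cmp_eq_gt_iff _ _).2 hpb]

end Across

theorem exists_isCounterpart_across [Nontrivial α] [Nontrivial β] (hd : IsDenseColoring d)
    (hmax : ∀ a, IsMax a → ∃ b, d b = c a ∧ IsMax b)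
    (hmin : ∀ a, IsMin a → ∃ b, d b = c a ∧ IsMin b)
    (f : PartialIso α β) (hf : ∀ p ∈ f.val, IsCounterpart c d p.1 p.2) (a : α) :
    ∃ b, IsCounterpart c d a b ∧ ∀ p ∈ f.val, cmp p.1 a = cmp p.2 b := by
  by_cases hdom : ∃ p ∈ f.val, p.1 = a
  · obtain ⟨p, hp, rfl⟩ := hdom
    exact ⟨p.2, hf p hp, fun q hq => f.prop q hq p hp⟩
  push Not at hdom
  by_cases hamax : IsMax a
  · obtain ⟨b, hb, hbmax⟩ := hmax a hamax
    exact ⟨b, ⟨hb, iff_of_true hamax hbmax, iff_of_false hamax.not_isMin hbmax.not_isMin⟩,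
      cmp_eq_cmp_of_isMax hf hdom hamax hbmax⟩
  by_cases hamin : IsMin a
  · obtain ⟨b, hb, hbmin⟩ := hmin a hamin
    exact ⟨b, ⟨hb, iff_of_false hamin.not_isMax hbmin.not_isMax, iff_of_true hamin hbmin⟩,
      cmp_eq_cmp_of_isMin hf hdom hamin hbmin⟩
  obtain ⟨b, hb, hbmax, hbmin, hcmp⟩ :=
    exists_cmp_eq_cmp_of_isDenseColoring hf hdom hd (c a)
  exact ⟨b, ⟨hb, iff_of_false hamax hbmax, iff_of_false hamin hbmin⟩, hcmp⟩

theorem exists_orderIso_of_isDenseColoring [Countable α] [Countable β] [Nontrivial α]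
    [Nontrivial β] (hc : IsDenseColoring c) (hd : IsDenseColoring d)
    (hmax : ∀ k, (∃ a, c a = k ∧ IsMax a) ↔ ∃ b, d b = k ∧ IsMax b)
    (hmin : ∀ k, (∃ a, c a = k ∧ IsMin a) ↔ ∃ b, d b = k ∧ IsMin b) :
    ∃ e : α ≃o β, ∀ a, d (e a) = c a := by
  obtain ⟨e, he⟩ := exists_orderIso_of_forth_of_back (IsCounterpart c d)
    (exists_isCounterpart_across hd (fun a ha => (hmax _).1 ⟨a, rfl, ha⟩)
      (fun a ha => (hmin _).1 ⟨a, rfl, ha⟩))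
    (fun f hf b => by
      obtain ⟨a, ha, hcmp⟩ := exists_isCounterpart_across hc
        (fun b hb => (hmax _).2 ⟨b, rfl, hb⟩) (fun b hb => (hmin _).2 ⟨b, rfl, hb⟩) f.comm
        (PartialIso.forall_mem_comm.2 fun p hp => (hf p hp).symm) b
      exact ⟨a, ha.symm, fun p hp => (PartialIso.forall_mem_comm.1 hcmp p hp).symm⟩)
  exact ⟨e, fun a => (he a).color_eq⟩

end Order

namespace IsShuffling

variable {A B : Type*} [LinearOrder A] [LinearOrder B] {S : A → B → Prop} (hS : IsShuffling S)
include hS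

theorem mono_left {x y : A} {b : B} (h : S x b) (hyx : y ≤ x) : S y b :=
  hS.2.1 b x h y hyx

theorem mono_right {a : A} {y y' : B} (h : S a y) (hyy : y ≤ y') : S a y' :=
  hS.2.2.2.2.1 a y h y' hyy

theorem exists_rel_not_rel_of_lt_right {b b' : B} (h : b < b') : ∃ x, S x b' ∧ ¬ S x b :=
  Set.exists_of_ssubset (hS.2.2.1 b b' h)

theorem exists_rel_not_rel_of_lt_left {a a' : A} (h : a < a') : ∃ y, S a y ∧ ¬ S a' y :=
  Set.exists_of_ssubset (hS.2.2.2.2.2 a a' h)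

theorem not_isLUB (b : B) (a : A) : ¬ IsLUB {x | S x b} a := fun h =>
  hS.2.2.2.1 b ⟨a, h⟩

theorem exists_gt_of_rel_s14 {x : A} {b : B} (h : S x b) : ∃ x', x < x' ∧ S x' b := by
  by_contra! hcon
  exact hS.not_isLUB b x (IsGreatest.isLUB ⟨h, fun y hy => not_lt.1 fun hxy => hcon y hxy hy⟩)

theorem exists_lt_of_not_rel {x : A} {b : B} (h : ¬ S x b) : ∃ x', x' < x ∧ ¬ S x' b := by
  by_contra! hcon
  have hfiber : {y | S y b} = Set.Iio x :=
    Set.ext fun y => ⟨fun hy => lt_of_not_ge fun hxy => h (hS.mono_left hy hxy), hcon y⟩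
  -- the supremum of `Iio x` is its greatest element if there is one, and `x` otherwise
  by_cases hpred : ∃ u, IsGreatest (Set.Iio x) u
  · obtain ⟨u, hu⟩ := hpred
    exact hS.not_isLUB b u (hfiber ▸ hu.isLUB)
  · refine hS.not_isLUB b x (hfiber ▸ ⟨fun y hy => hy.le, fun u hu => not_lt.1 fun hux => ?_⟩)
    exact hpred ⟨u, hux, fun y hy => hu hy⟩

theorem not_rel_of_isMax {a : A} (ha : IsMax a) (b : B) : ¬ S a b := fun h =>
  let ⟨_, hlt, _⟩ := hS.exists_gt_of_rel_s14 h
  ha.not_lt hlt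

theorem exists_rel_of_not_isMax {a : A} (ha : ¬ IsMax a) : ∃ b, S a b :=
  let ⟨_, hlt⟩ := not_isMax_iff.1 ha
  let ⟨b, hb, _⟩ := hS.exists_rel_not_rel_of_lt_left hlt
  ⟨b, hb⟩

theorem rel_of_isMin {a : A} (ha : IsMin a) (b : B) : S a b := by
  by_contra h
  obtain ⟨_, hlt, _⟩ := hS.exists_lt_of_not_rel h
  exact ha.not_lt hlt

theorem not_rel_of_isMin {b : B} (hb : IsMin b) (a : A) : ¬ S a b := fun h =>
  let ⟨_, hlt, ha'⟩ := hS.exists_gt_of_rel_s14 h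
  let ⟨y, _, hy⟩ := hS.exists_rel_not_rel_of_lt_left hlt
  hy (hS.mono_right ha' (hb.isBot y))

end IsShuffling

structure CoherentShuffling {ι : Type*} [LinearOrder ι] (A : ι → Type*)
    [∀ i, LinearOrder (A i)] where
  rel : ∀ i j : ι, A i → A j → Prop
  isShuffling : ∀ i j, i < j → IsShuffling (rel i j)
  rel_iff_exists : ∀ i j k, i < j → j < k → ∀ (a : A i) (c : A k),
    rel i k a c ↔ ∃ b : A j, rel i j a b ∧ rel j k b c

namespace CoherentShuffling

variable {ι : Type*} [LinearOrder ι] {A : ι → Type*} [∀ i, LinearOrder (A i)]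
  (𝒮 : CoherentShuffling A)

/-- The points of `Σ i, A i`, as a type of their own so that they can carry the order of `𝒮`. -/
structure Shuffle (_ : CoherentShuffling A) where
  index : ι
  val : A index

inductive Lt : 𝒮.Shuffle → 𝒮.Shuffle → Prop
  | rel {i j : ι} {a : A i} {b : A j} : i < j → 𝒮.rel i j a b → Lt ⟨i, a⟩ ⟨j, b⟩
  | not_rel {i j : ι} {a : A i} {b : A j} : j < i → ¬ 𝒮.rel j i b a → Lt ⟨i, a⟩ ⟨j, b⟩
  | fiber {i : ι} {a b : A i} : a < b → Lt ⟨i, a⟩ ⟨i, b⟩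

variable {𝒮} {i j k : ι}

theorem Lt.of_rel_of_not_rel {a : A i} {b : A j} {c : A k} (hij : i < j) (hab : 𝒮.rel i j a b)
    (hkj : k < j) (hcb : ¬ 𝒮.rel k j c b) : 𝒮.Lt ⟨i, a⟩ ⟨k, c⟩ := by
  rcases lt_trichotomy i k with hik | rfl | hki
  · obtain ⟨c', hac', hc'b⟩ := (𝒮.rel_iff_exists i k j hik hkj a b).1 hab
    exact .rel hik ((𝒮.isShuffling i k hik).mono_right hac'
      (le_of_not_gt fun hcc' => hcb ((𝒮.isShuffling k j hkj).mono_left hc'b hcc'.le)))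
  · exact .fiber (lt_of_not_ge fun hca => hcb ((𝒮.isShuffling i j hij).mono_left hab hca))
  · exact .not_rel hki fun hca => hcb ((𝒮.rel_iff_exists k i j hki hij c b).2 ⟨a, hca, hab⟩)

theorem Lt.of_not_rel_of_rel {a : A i} {b : A j} {c : A k} (hji : j < i)
    (hba : ¬ 𝒮.rel j i b a) (hjk : j < k) (hbc : 𝒮.rel j k b c) : 𝒮.Lt ⟨i, a⟩ ⟨k, c⟩ := by
  rcases lt_trichotomy i k with hik | rfl | hki
  · obtain ⟨a', hba', ha'c⟩ := (𝒮.rel_iff_exists j i k hji hik b c).1 hbc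
    exact .rel hik ((𝒮.isShuffling i k hik).mono_left ha'c
      (le_of_not_gt fun ha'a => hba ((𝒮.isShuffling j i hji).mono_right hba' ha'a.le)))
  · exact .fiber (lt_of_not_ge fun hca => hba ((𝒮.isShuffling j i hji).mono_right hbc hca))
  · exact .not_rel hki fun hca => hba ((𝒮.rel_iff_exists j k i hjk hki b a).2 ⟨c, hbc, hca⟩)

theorem Lt.trans : ∀ {u v w : 𝒮.Shuffle}, 𝒮.Lt u v → 𝒮.Lt v w → 𝒮.Lt u w
  | _, _, _, .rel hij hab, .rel hjk hbc =>
    .rel (hij.trans hjk) ((𝒮.rel_iff_exists _ _ _ hij hjk _ _).2 ⟨_, hab, hbc⟩)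
  | _, _, _, .rel hij hab, .not_rel hkj hcb => .of_rel_of_not_rel hij hab hkj hcb
  | _, _, _, .rel hij hab, .fiber hbc =>
    .rel hij ((𝒮.isShuffling _ _ hij).mono_right hab hbc.le)
  | _, _, _, .not_rel hji hba, .rel hjk hbc => .of_not_rel_of_rel hji hba hjk hbc
  | _, _, _, .not_rel hji hba, .not_rel hkj hcb => .not_rel (hkj.trans hji) fun hca => by
    obtain ⟨b', hcb', hb'a⟩ := (𝒮.rel_iff_exists _ _ _ hkj hji _ _).1 hca
    exact hba ((𝒮.isShuffling _ _ hji).mono_left hb'a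
      (le_of_not_gt fun hb'b => hcb ((𝒮.isShuffling _ _ hkj).mono_right hcb' hb'b.le)))
  | _, _, _, .not_rel hji hba, .fiber hbc =>
    .not_rel hji fun hca => hba ((𝒮.isShuffling _ _ hji).mono_left hca hbc.le)
  | _, _, _, .fiber hab, .rel hik hbc =>
    .rel hik ((𝒮.isShuffling _ _ hik).mono_left hbc hab.le)
  | _, _, _, .fiber hab, .not_rel hki hcb =>
    .not_rel hki fun hca => hcb ((𝒮.isShuffling _ _ hki).mono_right hca hab.le)
  | _, _, _, .fiber hab, .fiber hbc => .fiber (hab.trans hbc)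

instance : IsStrictTotalOrder 𝒮.Shuffle 𝒮.Lt where
  irrefl := by
    rintro ⟨i, a⟩ (⟨h, -⟩ | ⟨h, -⟩ | h) <;> exact lt_irrefl _ h
  trans _ _ _ := Lt.trans
  trichotomous := by
    rintro ⟨i, a⟩ ⟨j, b⟩ hab hba
    rcases lt_trichotomy i j with hij | rfl | hji
    · by_cases h : 𝒮.rel i j a b
      exacts [absurd (.rel hij h) hab, absurd (.not_rel hij h) hba]
    · rw [le_antisymm (le_of_not_gt fun h => hba (.fiber h))
        (le_of_not_gt fun h => hab (.fiber h))]
    · by_cases h : 𝒮.rel j i b a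
      exacts [absurd (.rel hji h) hba, absurd (.not_rel hji h) hab]

noncomputable instance : LinearOrder 𝒮.Shuffle :=
  @linearOrderOfSTO _ 𝒮.Lt _ (Classical.decRel _)

variable {a a' : A i} {b : A j}

theorem mk_lt_mk_iff : (⟨i, a⟩ : 𝒮.Shuffle) < ⟨i, a'⟩ ↔ a < a' := by
  refine ⟨fun h => ?_, .fiber⟩
  rcases h with ⟨h, -⟩ | ⟨h, -⟩ | h
  exacts [absurd h (lt_irrefl _), absurd h (lt_irrefl _), h]

theorem mk_lt_mk_iff_rel (hij : i < j) :
    (⟨i, a⟩ : 𝒮.Shuffle) < ⟨j, b⟩ ↔ 𝒮.rel i j a b := by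
  refine ⟨fun h => ?_, .rel hij⟩
  rcases h with ⟨-, h⟩ | ⟨h, -⟩ | h
  exacts [h, absurd h hij.asymm, absurd rfl hij.ne]

theorem mk_lt_mk_iff_not_rel (hij : i < j) :
    (⟨j, b⟩ : 𝒮.Shuffle) < ⟨i, a⟩ ↔ ¬ 𝒮.rel i j a b := by
  refine ⟨fun h => ?_, .not_rel hij⟩
  rcases h with ⟨h, -⟩ | ⟨-, h⟩ | h
  exacts [absurd h hij.asymm, h, absurd rfl hij.ne]

theorem exists_between_mk_of_ne (h : a < a') (hk : k ≠ i) :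
    ∃ c : A k, (⟨i, a⟩ : 𝒮.Shuffle) < ⟨k, c⟩ ∧ (⟨k, c⟩ : 𝒮.Shuffle) < ⟨i, a'⟩ := by
  rcases hk.lt_or_gt with hki | hik
  · obtain ⟨c, hca', hca⟩ := (𝒮.isShuffling k i hki).exists_rel_not_rel_of_lt_right h
    exact ⟨c, (mk_lt_mk_iff_not_rel hki).2 hca, (mk_lt_mk_iff_rel hki).2 hca'⟩
  · obtain ⟨c, hac, ha'c⟩ := (𝒮.isShuffling i k hik).exists_rel_not_rel_of_lt_left h
    exact ⟨c, (mk_lt_mk_iff_rel hik).2 hac, (mk_lt_mk_iff_not_rel hik).2 ha'c⟩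

theorem exists_lt_mk_of_lt {u : 𝒮.Shuffle} (h : u < ⟨i, a⟩) (hu : u.index ≠ i) :
    ∃ a' < a, u < ⟨i, a'⟩ := by
  obtain ⟨j, b⟩ := u
  rcases hu.lt_or_gt with hji | hij
  · have hS := 𝒮.isShuffling j i hji
    obtain ⟨b', hbb', hb'a⟩ := hS.exists_gt_of_rel_s14 ((mk_lt_mk_iff_rel hji).1 h)
    obtain ⟨a', hba', hb'a'⟩ := hS.exists_rel_not_rel_of_lt_left hbb'
    exact ⟨a', lt_of_not_ge fun haa' => hb'a' (hS.mono_right hb'a haa'),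
      (mk_lt_mk_iff_rel hji).2 hba'⟩
  · obtain ⟨a', ha'a, ha'b⟩ :=
      (𝒮.isShuffling i j hij).exists_lt_of_not_rel ((mk_lt_mk_iff_not_rel hij).1 h)
    exact ⟨a', ha'a, (mk_lt_mk_iff_not_rel hij).2 ha'b⟩

theorem exists_between_mk [Nontrivial ι] (h : a < a') (k : ι) :
    ∃ v : 𝒮.Shuffle, v.index = k ∧ ⟨i, a⟩ < v ∧ v < ⟨i, a'⟩ := by
  by_cases hk : k = i
  · subst hk
    -- pass through a point of another index, then come back into `A k` below `a'`
    obtain ⟨j, hj⟩ := exists_ne k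
    obtain ⟨c, hac, hca'⟩ := exists_between_mk_of_ne (𝒮 := 𝒮) h hj
    obtain ⟨a'', ha''a', hca''⟩ := exists_lt_mk_of_lt hca' hj
    exact ⟨⟨k, a''⟩, rfl, hac.trans hca'', mk_lt_mk_iff.2 ha''a'⟩
  · obtain ⟨c, hac, hca'⟩ := exists_between_mk_of_ne (𝒮 := 𝒮) h hk
    exact ⟨⟨k, c⟩, rfl, hac, hca'⟩

theorem isDenseColoring_index [Nontrivial ι] :
    Order.IsDenseColoring (Shuffle.index : 𝒮.Shuffle → ι) := by
  rintro u ⟨j, b⟩ huw k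
  by_cases hu : u.index = j
  · obtain ⟨i, a⟩ := u
    subst hu
    obtain ⟨v, hv, hav, hvb⟩ := exists_between_mk (mk_lt_mk_iff.1 huw) k
    exact ⟨v, hav, hvb, hv⟩
  · obtain ⟨b', hb'b, hub'⟩ := exists_lt_mk_of_lt huw hu
    obtain ⟨v, hv, hb'v, hvb⟩ := exists_between_mk (𝒮 := 𝒮) hb'b k
    exact ⟨v, hub'.trans hb'v, hvb, hv⟩

theorem isMin_mk_iff {a : A k} : IsMin (⟨k, a⟩ : 𝒮.Shuffle) ↔ IsMin a := by
  refine ⟨fun h => isMin_iff_forall_not_lt.2 fun a' ha' => h.not_lt (mk_lt_mk_iff.2 ha'),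
    fun h => isMin_iff_forall_not_lt.2 fun ⟨j, b⟩ => ?_⟩
  rcases lt_trichotomy j k with hjk | rfl | hkj
  · rw [mk_lt_mk_iff_rel hjk]
    exact (𝒮.isShuffling j k hjk).not_rel_of_isMin h b
  · rw [mk_lt_mk_iff]
    exact h.not_lt
  · rw [mk_lt_mk_iff_not_rel hkj, not_not]
    exact (𝒮.isShuffling k j hkj).rel_of_isMin h b

theorem isMax_mk_iff {a : A k} :
    IsMax (⟨k, a⟩ : 𝒮.Shuffle) ↔ IsMax a ∧ ∀ j < k, ∀ b : A j, ¬ IsMax b := by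
  constructor
  · intro h
    refine ⟨isMax_iff_forall_not_lt.2 fun a' ha' => h.not_lt (mk_lt_mk_iff.2 ha'),
      fun j hjk b hb => ?_⟩
    exact h.not_lt ((mk_lt_mk_iff_not_rel hjk).2 ((𝒮.isShuffling j k hjk).not_rel_of_isMax hb a))
  rintro ⟨ha, hfirst⟩
  refine isMax_iff_forall_not_lt.2 fun ⟨j, b⟩ => ?_
  rcases lt_trichotomy j k with hjk | rfl | hkj
  · rw [mk_lt_mk_iff_not_rel hjk, not_not]
    obtain ⟨c, hbc⟩ := (𝒮.isShuffling j k hjk).exists_rel_of_not_isMax (hfirst j hjk b)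
    exact (𝒮.isShuffling j k hjk).mono_right hbc (ha.isTop c)
  · rw [mk_lt_mk_iff]
    exact ha.not_lt
  · rw [mk_lt_mk_iff_rel hkj]
    exact (𝒮.isShuffling k j hkj).not_rel_of_isMax ha b

theorem exists_isMax_iff (k : ι) : (∃ u : 𝒮.Shuffle, u.index = k ∧ IsMax u) ↔
    (∃ a : A k, IsMax a) ∧ ∀ j < k, ¬ ∃ b : A j, IsMax b := by
  constructor
  · rintro ⟨⟨_, a⟩, rfl, h⟩
    obtain ⟨ha, hfirst⟩ := isMax_mk_iff.1 h
    exact ⟨⟨a, ha⟩, fun j hj ⟨b, hb⟩ => hfirst j hj b hb⟩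
  · rintro ⟨⟨a, ha⟩, hfirst⟩
    exact ⟨⟨k, a⟩, rfl, isMax_mk_iff.2 ⟨ha, fun j hj b hb => hfirst j hj ⟨b, hb⟩⟩⟩

theorem exists_isMin_iff (k : ι) :
    (∃ u : 𝒮.Shuffle, u.index = k ∧ IsMin u) ↔ ∃ a : A k, IsMin a := by
  constructor
  · rintro ⟨⟨_, a⟩, rfl, h⟩
    exact ⟨a, isMin_mk_iff.1 h⟩
  · rintro ⟨a, ha⟩
    exact ⟨⟨k, a⟩, rfl, isMin_mk_iff.2 ha⟩

instance [Nontrivial ι] : Nontrivial 𝒮.Shuffle := by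
  obtain ⟨i, j, hij⟩ := exists_pair_lt ι
  obtain ⟨a, b, -⟩ := (𝒮.isShuffling i j hij).1
  exact ⟨⟨i, a⟩, ⟨j, b⟩, fun h => hij.ne (congrArg Shuffle.index h)⟩

variable (𝒮) in
def equivSigma : 𝒮.Shuffle ≃ Σ i, A i where
  toFun u := ⟨u.index, u.val⟩
  invFun u := ⟨u.1, u.2⟩
  left_inv _ := rfl
  right_inv _ := rfl

instance [Countable ι] [∀ i, Countable (A i)] : Countable 𝒮.Shuffle :=
  Countable.of_equiv _ (equivSigma 𝒮).symm

variable {B : ι → Type*} [∀ i, LinearOrder (B i)]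

theorem exists_fiber_orderIso_of_index_eq {𝒜 : CoherentShuffling A} {ℬ : CoherentShuffling B}
    (e : 𝒜.Shuffle ≃o ℬ.Shuffle) (he : ∀ u, (e u).index = u.index) :
    ∃ f : ∀ i, A i ≃o B i, ∀ i (a : A i), e ⟨i, a⟩ = ⟨i, f i a⟩ := by
  have key (i : ι) (a : A i) : ∃ b : B i, e ⟨i, a⟩ = ⟨i, b⟩ := by
    rcases h : e ⟨i, a⟩ with ⟨j, b⟩
    obtain rfl : j = i := by simpa [h] using he ⟨i, a⟩
    exact ⟨b, rfl⟩
  choose g hg using key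
  have mono (i : ι) : StrictMono (g i) := fun a a' h => by
    have := e.strictMono (mk_lt_mk_iff.2 h : (⟨i, a⟩ : 𝒜.Shuffle) < ⟨i, a'⟩)
    rwa [hg, hg, mk_lt_mk_iff] at this
  have surj (i : ι) : Function.Surjective (g i) := fun b => by
    rcases h : e.symm ⟨i, b⟩ with ⟨j, a⟩
    have hj := he (e.symm ⟨i, b⟩)
    rw [e.apply_symm_apply, h] at hj
    obtain rfl : i = j := hj
    refine ⟨a, ?_⟩
    simpa [← h] using (hg i a).symm
  exact ⟨fun i => (mono i).orderIsoOfSurjective _ (surj i), hg⟩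

theorem exists_orderIso_index_eq [Nontrivial ι] [Countable ι] [∀ i, Countable (A i)]
    [∀ i, Countable (B i)] (𝒜 : CoherentShuffling A) (ℬ : CoherentShuffling B)
    (hiso : ∀ i, Nonempty (A i ≃o B i)) :
    ∃ e : 𝒜.Shuffle ≃o ℬ.Shuffle, ∀ u, (e u).index = u.index := by
  have hmax (i : ι) : (∃ a : A i, IsMax a) ↔ ∃ b : B i, IsMax b := by
    obtain ⟨e⟩ := hiso i
    simp only [e.surjective.exists, e.isMax_apply]
  have hmin (i : ι) : (∃ a : A i, IsMin a) ↔ ∃ b : B i, IsMin b := by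
    obtain ⟨e⟩ := hiso i
    simp only [e.surjective.exists, e.isMin_apply]
  exact Order.exists_orderIso_of_isDenseColoring isDenseColoring_index isDenseColoring_index
    (fun k => by simp only [exists_isMax_iff, hmax])
    (fun k => by simp only [exists_isMin_iff, hmin])

end CoherentShuffling

open CoherentShuffling in
theorem stmt_14 {ι : Type*} [LinearOrder ι] [Countable ι]
    (A B : ι → Type*) [∀ i, LinearOrder (A i)] [∀ i, LinearOrder (B i)]
    [∀ i, Countable (A i)] [∀ i, Countable (B i)]
    (SA : ∀ i j : ι, A i → A j → Prop) (SB : ∀ i j : ι, B i → B j → Prop)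
    (hshA : ∀ i j : ι, i < j → IsShuffling (SA i j))
    (hshB : ∀ i j : ι, i < j → IsShuffling (SB i j))
    (hcohA : ∀ i j k : ι, i < j → j < k → ∀ (a : A i) (c : A k),
      SA i k a c ↔ ∃ b : A j, SA i j a b ∧ SA j k b c)
    (hcohB : ∀ i j k : ι, i < j → j < k → ∀ (a : B i) (c : B k),
      SB i k a c ↔ ∃ b : B j, SB i j a b ∧ SB j k b c)
    (hiso : ∀ i : ι, Nonempty (A i ≃o B i)) :
    ∃ f : ∀ i : ι, A i ≃o B i, ∀ i j : ι, i < j → ∀ (x : A i) (y : A j),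
      SA i j x y ↔ SB i j (f i x) (f j y) := by
  rcases subsingleton_or_nontrivial ι with _ | _
  · exact ⟨fun i => (hiso i).some, fun i j hij => absurd (Subsingleton.elim i j) hij.ne⟩
  let 𝒜 : CoherentShuffling A := ⟨SA, hshA, hcohA⟩
  let ℬ : CoherentShuffling B := ⟨SB, hshB, hcohB⟩
  obtain ⟨e, he⟩ := exists_orderIso_index_eq 𝒜 ℬ hiso
  obtain ⟨f, hf⟩ := exists_fiber_orderIso_of_index_eq e he
  refine ⟨f, fun i j hij x y => ?_⟩
  calc SA i j x y ↔ (⟨i, x⟩ : 𝒜.Shuffle) < ⟨j, y⟩ := (mk_lt_mk_iff_rel (𝒮 := 𝒜) hij).symm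
    _ ↔ e ⟨i, x⟩ < e ⟨j, y⟩ := e.lt_iff_lt.symm
    _ ↔ SB i j (f i x) (f j y) := by rw [hf, hf, mk_lt_mk_iff_rel hij]
end

section
/- The restriction of the real ordering to ℚ × (ℝ \ ℚ), i.e., the relation S = {(q,r) ∈ ℚ × (ℝ \ ℚ) | q < r}, is a shuffling relation between the linear orders (ℚ,<) and (ℝ \ ℚ,<). -/
/-! ℚ and the irrationals are disjoint and both dense in ℝ. For any two such suborders
`A`, `B` of a linear order, `a < b` is shuffling: a point of one set strictly between two
points of the other separates their fibers, and no `a ∈ A` is the supremum of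
`{x ∈ A | x < b}`, since `a ≠ b` and a point of `A` strictly between `a` and `b` refutes it. -/

section Interleaved

variable {A B L : Type*} [LinearOrder A] [LinearOrder B] [LinearOrder L] {f : A → L}

theorem not_isLUB_setOf_lt (hf : StrictMono f)
    (hf_dense : ∀ x y : L, x < y → ∃ a, x < f a ∧ f a < y) {c : L} {a : A}
    (hac : f a ≠ c) :
    ¬ IsLUB {x | f x < c} a := by
  intro hlub
  rcases hac.lt_or_gt with hlt | hgt
  · obtain ⟨x, hax, hxc⟩ := hf_dense _ _ hlt
    exact (hf.lt_iff_lt.mp hax).not_ge (hlub.1 hxc)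
  · obtain ⟨x, hcx, hxa⟩ := hf_dense _ _ hgt
    have hupper : x ∈ upperBounds {x | f x < c} := fun y hy => (hf.lt_iff_lt.mp (hy.trans hcx)).le
    exact (hf.lt_iff_lt.mp hxa).not_ge (hlub.2 hupper)

theorem isShuffling_of_interleaved [Nonempty A] [Nonempty B] {g : B → L}
    (hf : StrictMono f) (hg : StrictMono g)
    (hf_dense : ∀ x y : L, x < y → ∃ a, x < f a ∧ f a < y)
    (hg_dense : ∀ x y : L, x < y → ∃ b, x < g b ∧ g b < y)
    (hfg : ∀ a b, f a ≠ g b) :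
    IsShuffling (fun a b => f a < g b) := by
  refine ⟨?nonempty, ?initial, ?strictMono_left, ?noLUB, ?final, ?strictAnti_right⟩
  case nonempty =>
    obtain ⟨a⟩ := ‹Nonempty A›
    obtain ⟨b⟩ := ‹Nonempty B›
    rcases (hfg a b).lt_or_gt with hlt | hgt
    · exact ⟨a, b, hlt⟩
    · obtain ⟨b', hbb', -⟩ := hg_dense _ _ hgt
      obtain ⟨a', -, ha'b'⟩ := hf_dense _ _ hbb'
      exact ⟨a', b', ha'b'⟩
  case initial => exact fun b x hx y hyx => (hf.monotone hyx).trans_lt hx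
  case strictMono_left =>
    intro b b' hbb'
    obtain ⟨a, hba, hab'⟩ := hf_dense _ _ (hg hbb')
    exact (Set.ssubset_iff_of_subset fun x hx => hx.trans (hg hbb')).mpr
      ⟨a, hab', hba.not_gt⟩
  case noLUB => exact fun b ⟨a, hlub⟩ => not_isLUB_setOf_lt hf hf_dense (hfg a b) hlub
  case final => exact fun a y hy y' hyy' => hy.trans_le (hg.monotone hyy')
  case strictAnti_right =>
    intro a a' haa'
    obtain ⟨b, hab, hba'⟩ := hg_dense _ _ (hf haa')
    exact (Set.ssubset_iff_of_subset fun y hy => (hf haa').trans hy).mpr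
      ⟨b, hab, hba'.not_gt⟩

end Interleaved

theorem stmt_16 :
    IsShuffling (fun (q : ℚ) (r : {x : ℝ // Irrational x}) => (q : ℝ) < (r : ℝ)) := by
  have : Nonempty {x : ℝ // Irrational x} := ⟨⟨√2, irrational_sqrt_two⟩⟩
  refine isShuffling_of_interleaved Rat.cast_strictMono (fun _ _ h => h)
    (fun _ _ h => (exists_rat_btwn h).imp fun _ => id) (fun _ _ h => ?_)
    (fun q r => (r.2.ne_rat q).symm)
  obtain ⟨r, hr, hxr, hry⟩ := exists_irrational_btwn h
  exact ⟨⟨r, hr⟩, hxr, hry⟩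
end

section
/- Let (D,<) be a dense complete linear order and let A, B ⊆ D be disjoint subsets each of which is topologically dense in D (between any two distinct elements of D there is an element of A and an element of B). Then the relation S = {(a,b) ∈ A × B | a < b} is a shuffling relation between the induced orders (A,<) and (B,<). -/
/-!
The fibers of `a < b` are automatically initial resp. final segments. Density of `A` puts an
element of `A` strictly between two points of `B` (and vice versa), which makes the fiber
families strictly monotone. The fiber of `b` is `A ∩ (-∞, b)` with `b ∉ A`, so a supremum `a ≠ b`
of it is refuted by an element of `A` strictly between `a` and `b`.
-/

def IsTopDense {D : Type*} [LinearOrder D] (A : Set D) : Prop :=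
  ∀ c d : D, c < d → ∃ a ∈ A, c < a ∧ a < d

section

variable {D : Type*} [LinearOrder D] {A : Set D}

theorem IsTopDense.exists_mem_lt_mem [Nontrivial D] {B : Set D} (hA : IsTopDense A)
    (hB : IsTopDense B) : ∃ a ∈ A, ∃ b ∈ B, a < b := by
  obtain ⟨c, d, hcd⟩ := exists_pair_lt D
  obtain ⟨a, ha, -, had⟩ := hA c d hcd
  obtain ⟨b, hb, hab, -⟩ := hB a d had
  exact ⟨a, ha, b, hb, hab⟩

theorem IsTopDense.setOf_coe_lt_ssubset (hA : IsTopDense A) {c d : D} (hcd : c < d) :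
    {x : A | (x : D) < c} ⊂ {x : A | (x : D) < d} := by
  refine ⟨fun x hx => lt_trans hx hcd, fun hsub => ?_⟩
  obtain ⟨a, ha, hca, had⟩ := hA c d hcd
  exact (hsub (show (⟨a, ha⟩ : A) ∈ {x : A | (x : D) < d} from had)).not_gt hca

theorem IsTopDense.setOf_lt_coe_ssubset (hA : IsTopDense A) {c d : D} (hcd : c < d) :
    {x : A | d < (x : D)} ⊂ {x : A | c < (x : D)} := by
  refine ⟨fun x hx => lt_trans hcd hx, fun hsub => ?_⟩
  obtain ⟨a, ha, hca, had⟩ := hA c d hcd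
  exact (hsub (show (⟨a, ha⟩ : A) ∈ {x : A | c < (x : D)} from hca)).not_gt had

theorem IsTopDense.not_isLUB_setOf_coe_lt (hA : IsTopDense A) {b : D} (hb : b ∉ A) (a : A) :
    ¬ IsLUB {x : A | (x : D) < b} a := by
  intro hlub
  rcases lt_or_gt_of_ne (show (a : D) ≠ b from fun h => hb (h ▸ a.2)) with hab | hba
  · obtain ⟨a', ha', haa', ha'b⟩ := hA a b hab
    exact (hlub.1 (show (⟨a', ha'⟩ : A) ∈ {x : A | (x : D) < b} from ha'b)).not_gt haa'
  · obtain ⟨a', ha', hba', ha'a⟩ := hA b a hba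
    have hub : (⟨a', ha'⟩ : A) ∈ upperBounds {x : A | (x : D) < b} :=
      fun x hx => (lt_trans hx hba').le
    exact (hlub.2 hub).not_gt ha'a

end

theorem stmt_17_general {D : Type*} [LinearOrder D] [Nontrivial D]
    (A B : Set D) (hdisj : Disjoint A B)
    (hA : ∀ c d : D, c < d → ∃ a ∈ A, c < a ∧ a < d)
    (hB : ∀ c d : D, c < d → ∃ b ∈ B, c < b ∧ b < d) :
    IsShuffling (fun (a : A) (b : B) => (a : D) < (b : D)) := by
  have hA : IsTopDense A := hA
  have hB : IsTopDense B := hB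
  obtain ⟨a, ha, b, hb, hab⟩ := hA.exists_mem_lt_mem hB
  refine ⟨⟨⟨a, ha⟩, ⟨b, hb⟩, hab⟩, fun _ _ hx _ hyx => lt_of_le_of_lt hyx hx,
    fun _ _ h => hA.setOf_coe_lt_ssubset h, fun b ⟨a, hlub⟩ => ?_,
    fun _ _ hy _ hyy' => lt_of_lt_of_le hy hyy', fun _ _ h => hB.setOf_lt_coe_ssubset h⟩
  exact hA.not_isLUB_setOf_coe_lt (hdisj.notMem_of_mem_right b.2) a hlub

theorem stmt_17 {D : Type*} [LinearOrder D] [DenselyOrdered D] [Nontrivial D]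
    (hsup : ∀ s : Set D, s.Nonempty → BddAbove s → ∃ x : D, IsLUB s x)
    (hinf : ∀ s : Set D, s.Nonempty → BddBelow s → ∃ x : D, IsGLB s x)
    (A B : Set D) (hdisj : Disjoint A B)
    (hA : ∀ c d : D, c < d → ∃ a ∈ A, c < a ∧ a < d)
    (hB : ∀ c d : D, c < d → ∃ b ∈ B, c < b ∧ b < d) :
    IsShuffling (fun (a : A) (b : B) => (a : D) < (b : D)) :=
  stmt_17_general A B hdisj hA hB
end
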